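/- For every integer p ≥ 1, every R > 0 and every L > 0, ∫₀^R (r − R)^{p−1} · I₀(L√(2r)) dr = −(p−1)! · (−√(2R)/L)^p · I_p(L√(2R)). -/

import Mathlib

open Real MeasureTheory

/-- Modified Bessel function of the first kind of nonnegative integer order `ν`. -/
noncomputable def besselI (ν : ℕ) (x : ℝ) : ℝ :=
  ∑' k : ℕ, (x / 2) ^ (2 * k + ν) / ((Nat.factorial k : ℝ) * (Nat.factorial (k + ν) : ℝ))

/-!
Expand `I₀(L√(2r)) = ∑ₖ (L²/2)ᵏ rᵏ / (k!)²` and integrate termwise against `(r - R)^q`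
(dominated convergence, the series being a power series in `r`). Each term is a Beta integral
`∫₀^R rᵏ (R - r)^q dr = k! q! R^(k+q+1) / (k+q+1)!`, and the resulting series is
`I_{q+1}(L√(2R))` up to the factor `(-√(2R)/L)^(q+1) = (-R)^(q+1) / (L√(2R)/2)^(q+1)`.
-/

open Set Interval Nat

theorem besselI_eq_mul_tsum (ν : ℕ) (x : ℝ) :
    besselI ν x = (x / 2) ^ ν * ∑' k, ((x / 2) ^ 2) ^ k / (k ! * (k + ν)! : ℝ) := by
  rw [besselI, ← tsum_mul_left]
  congr 1 with k
  rw [pow_add, pow_mul]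
  ring

theorem summable_pow_div_factorial_mul_factorial (ν : ℕ) (y : ℝ) :
    Summable fun k => y ^ k / (k ! * (k + ν)! : ℝ) := by
  refine (Real.summable_pow_div_factorial ‖y‖).of_norm_bounded fun k => ?_
  rw [norm_div, norm_pow, norm_mul, Real.norm_natCast, Real.norm_natCast]
  gcongr
  exact le_mul_of_one_le_right (by positivity) (one_le_cast.mpr (k + ν).factorial_pos)

theorem integral_pow_mul_sub_pow (m n : ℕ) {R : ℝ} (hR : 0 < R) :
    ∫ r in (0:ℝ)..R, r ^ m * (R - r) ^ n = m ! * n ! / (m + n + 1)! * R ^ (m + n + 1) := by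
  have hsum : ((m : ℂ) + 1) + ((n : ℂ) + 1) = ((m + n + 1 : ℕ) : ℂ) + 1 := by push_cast; ring
  have h := Complex.betaIntegral_scaled (m + 1) (n + 1) hR
  rw [Complex.betaIntegral_eq_Gamma_mul_div _ _ (by simp; positivity) (by simp; positivity),
    hsum, add_sub_cancel_right, add_sub_cancel_right, add_sub_cancel_right] at h
  simp only [Complex.Gamma_nat_eq_factorial, Complex.cpow_natCast] at h
  apply Complex.ofReal_injective
  push_cast [← intervalIntegral.integral_ofReal, h]
  ring

theorem summable_mul_pow_of_abs_le {a : ℕ → ℝ} {R t : ℝ}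
    (ha : Summable fun k => ‖a k‖ * R ^ k) (ht : |t| ≤ R) : Summable fun k => a k * t ^ k := by
  refine ha.of_norm_bounded fun k => ?_
  rw [norm_mul, norm_pow, Real.norm_eq_abs t]
  gcongr

theorem hasSum_integral_mul_tsum_pow {a : ℕ → ℝ} {g : ℝ → ℝ} {R : ℝ} (hR : 0 ≤ R)
    (hg : Continuous g) (ha : Summable fun k => ‖a k‖ * R ^ k) :
    HasSum (fun k => a k * ∫ r in (0:ℝ)..R, g r * r ^ k)
      (∫ r in (0:ℝ)..R, g r * ∑' k, a k * r ^ k) := by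
  have hIoc : ∀ t ∈ Ι 0 R, |t| ≤ R := fun t ht => by
    rw [uIoc_of_le hR] at ht
    exact abs_le.2 ⟨by linarith [ht.1], ht.2⟩
  have key := intervalIntegral.hasSum_integral_of_dominated_convergence
    (μ := volume) (F := fun k r => g r * (a k * r ^ k)) (fun k t => ‖g t‖ * (‖a k‖ * R ^ k))
    (fun k => by fun_prop)
    (fun k => ae_of_all _ fun t ht => by
      rw [norm_mul, norm_mul, norm_pow, Real.norm_eq_abs t]
      gcongr
      exact hIoc t ht)
    (ae_of_all _ fun t _ => ha.mul_left _)
    (by simp_rw [tsum_mul_left]; exact (by fun_prop : Continuous _).intervalIntegrable _ _)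
    (ae_of_all _ fun t ht => (summable_mul_pow_of_abs_le ha (hIoc t ht)).hasSum.mul_left (g t))
  simpa only [mul_left_comm (g _), intervalIntegral.integral_const_mul] using key

theorem neg_sqrt_div_pow_mul_besselI (p : ℕ) {R : ℝ} (hR : 0 ≤ R) {L : ℝ} (hL : L ≠ 0) :
    (-√(2 * R) / L) ^ p * besselI p (L * √(2 * R)) =
      (-R) ^ p * ∑' k, (L ^ 2 * R / 2) ^ k / (k ! * (k + p)! : ℝ) := by
  have hsq : √(2 * R) ^ 2 = 2 * R := sq_sqrt (by positivity)
  have hprod : -√(2 * R) / L * (L * √(2 * R) / 2) = -R := by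
    field_simp
    linear_combination -hsq
  have hhalf : (L * √(2 * R) / 2) ^ 2 = L ^ 2 * R / 2 := by
    rw [div_pow, mul_pow, hsq]
    ring
  rw [besselI_eq_mul_tsum, ← mul_assoc, ← mul_pow, hprod, hhalf]

theorem besselI_zero_mul_sqrt {r : ℝ} (hr : 0 ≤ r) (L : ℝ) :
    besselI 0 (L * √(2 * r)) = ∑' k, (L ^ 2 / 2) ^ k / (k ! * k ! : ℝ) * r ^ k := by
  have hhalf : (L * √(2 * r) / 2) ^ 2 = L ^ 2 / 2 * r := by
    rw [div_pow, mul_pow, sq_sqrt (by positivity)]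
    ring
  rw [besselI_eq_mul_tsum, hhalf, pow_zero, one_mul]
  congr 1 with k
  rw [mul_pow, add_zero, div_mul_eq_mul_div, mul_comm]

theorem integral_sub_pow_mul_besselI_zero_sqrt (q : ℕ) {R : ℝ} (hR : 0 < R) (L : ℝ) :
    ∫ r in (0:ℝ)..R, (r - R) ^ q * besselI 0 (L * √(2 * r)) =
      (-1) ^ q * q ! * R ^ (q + 1) * ∑' k, (L ^ 2 * R / 2) ^ k / (k ! * (k + (q + 1))! : ℝ) := by
  have hcoeff : Summable fun k => ‖(L ^ 2 / 2) ^ k / (k ! * k ! : ℝ)‖ * R ^ k := by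
    refine (summable_pow_div_factorial_mul_factorial 0 (L ^ 2 * R / 2)).congr fun k => ?_
    rw [Real.norm_of_nonneg (by positivity), add_zero, div_mul_eq_mul_div, ← mul_pow]
    ring_nf
  rw [intervalIntegral.integral_congr fun r hr => by
      rw [besselI_zero_mul_sqrt (uIcc_of_le hR.le ▸ hr).1 L],
    ← (hasSum_integral_mul_tsum_pow hR.le (by fun_prop) hcoeff).tsum_eq, ← tsum_mul_left]
  congr 1 with k
  have hflip : ∫ r in (0:ℝ)..R, (r - R) ^ q * r ^ k =
      (-1) ^ q * ∫ r in (0:ℝ)..R, r ^ k * (R - r) ^ q := by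
    rw [← intervalIntegral.integral_const_mul]
    congr 1 with r
    rw [← neg_sub, neg_pow]
    ring
  rw [hflip, integral_pow_mul_sub_pow k q hR, ← add_assoc]
  field_simp
  ring

theorem stmt19 (p : ℕ) (hp : 1 ≤ p) (R L : ℝ) (hR : 0 < R) (hL : 0 < L) :
    (∫ r in (0:ℝ)..R, (r - R) ^ (p - 1) * besselI 0 (L * Real.sqrt (2 * r))) =
      -((Nat.factorial (p - 1) : ℝ)) * (-Real.sqrt (2 * R) / L) ^ p *
        besselI p (L * Real.sqrt (2 * R)) := by
  obtain ⟨q, rfl⟩ : ∃ q, p = q + 1 := ⟨p - 1, (Nat.sub_add_cancel hp).symm⟩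
  rw [Nat.add_sub_cancel, integral_sub_pow_mul_besselI_zero_sqrt q hR L, mul_assoc (-(q ! : ℝ)),
    neg_sqrt_div_pow_mul_besselI (q + 1) hR.le hL.ne']
  ring
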